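/- arXiv:2310.00878 — 3 statements merged into one kernel-verified Lean document; each statement's English description precedes it below -/
import Mathlib

section
/- The burnt pancake graph BP_n contains no cycle of length less than 8 for n ≥ 2; equivalently, BP_n has girth at least 8 (and exactly 8, since BP_2 is an 8-cycle and BP_2 embeds as a cluster chain in BP_n). -/
/-- The `i`-th signed prefix reversal of `x : Fin n → ℤ` (for `1 ≤ i ≤ n`):
negate and reverse the first `i` entries. -/
def prefixRev (n i : ℕ) (x : Fin n → ℤ) : Fin n → ℤ :=
  fun k => if h : k.1 < i ∧ i ≤ n then -(x ⟨i - 1 - k.1, by omega⟩) else x k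

/-- `x : Fin n → ℤ` is a signed permutation of `[n]`. -/
def IsSignedPerm (n : ℕ) (x : Fin n → ℤ) : Prop :=
  (∀ k, x k ≠ 0 ∧ (x k).natAbs ≤ n) ∧ Function.Injective fun k => (x k).natAbs

/-- Vertices of the burnt pancake graph: signed permutations of `[n]`. -/
def BPVert (n : ℕ) : Type := {x : Fin n → ℤ // IsSignedPerm n x}

/-- The burnt pancake graph `BP_n`. -/
def BP (n : ℕ) : SimpleGraph (BPVert n) where
  Adj u v := u ≠ v ∧ ∃ i, 1 ≤ i ∧ i ≤ n ∧
      (v.1 = prefixRev n i u.1 ∨ u.1 = prefixRev n i v.1)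
  symm := by
    constructor
    rintro u v ⟨hne, i, h1, h2, h3⟩
    exact ⟨hne.symm, i, h1, h2, h3.symm⟩
  loopless := by constructor; rintro u ⟨hne, -⟩; exact hne rfl

/-- The last entry of a vertex of `BP_n` (junk value `0` if `n = 0`). -/
def lastEntry {n : ℕ} (x : BPVert n) : ℤ :=
  if h : 0 < n then x.1 ⟨n - 1, by omega⟩ else 0

/-- The first entry of a vertex of `BP_n` (junk value `0` if `n = 0`). -/
def firstEntry {n : ℕ} (x : BPVert n) : ℤ :=
  if h : 0 < n then x.1 ⟨0, h⟩ else 0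

/-- The cluster `BP_n^j`: vertices whose last entry is `j`. -/
def cluster (n : ℕ) (j : ℤ) : Set (BPVert n) := {x | lastEntry x = j}

namespace BPG


def step (i : ℕ) (ps : ℕ × Bool) : ℕ × Bool :=
  if ps.1 < i then (i - 1 - ps.1, !ps.2) else ps

def run (l : List ℕ) (ps : ℕ × Bool) : ℕ × Bool :=
  l.foldl (fun a i => step i a) ps

@[simp] lemma run_nil (ps : ℕ × Bool) : run [] ps = ps := rfl
@[simp] lemma run_cons (i : ℕ) (l : List ℕ) (ps : ℕ × Bool) :
    run (i :: l) ps = run l (step i ps) := rfl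
lemma run_append (l₁ l₂ : List ℕ) (ps : ℕ × Bool) :
    run (l₁ ++ l₂) ps = run l₂ (run l₁ ps) := (List.foldl_append)

lemma step_move {i p : ℕ} (s : Bool) (h : p < i) : step i (p, s) = (i - 1 - p, !s) := by
  unfold step; rw [if_pos h]

lemma step_stay {i p : ℕ} (s : Bool) (h : ¬ p < i) : step i (p, s) = (p, s) := by
  unfold step; rw [if_neg h]

lemma run_lt (m : ℕ) (l : List ℕ) (ps : ℕ × Bool) (hl : ∀ i ∈ l, i < m)
    (hp : ps.1 + 1 < m) : (run l ps).1 + 1 < m := by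
  induction l generalizing ps with
  | nil => simpa using hp
  | cons i t ih =>
    rw [run_cons]
    refine ih _ (fun j hj => hl j (List.mem_cons_of_mem _ hj)) ?_
    have hi : i < m := hl i List.mem_cons_self
    unfold step
    split
    · simp; omega
    · simpa using hp

lemma run_fix (m : ℕ) (l : List ℕ) (s : Bool) (hl : ∀ i ∈ l, i < m) :
    run l (m - 1, s) = (m - 1, s) := by
  induction l with
  | nil => rfl
  | cons i t ih =>
    rw [run_cons]
    have hi : i < m := hl i List.mem_cons_self
    have : step i (m - 1, s) = (m - 1, s) := by
      unfold step; split
      · exfalso; simp_all; omega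
      · rfl
    rw [this]; exact ih fun j hj => hl j (List.mem_cons_of_mem _ hj)

lemma short_loop (l : List ℕ) (s : Bool) (h1 : ∀ i ∈ l, 1 ≤ i)
    (hne : ∀ a t, l ≠ a :: a :: t) (hlen : l.length ≤ 2)
    (hrun : run l (0, s) = (0, s)) : l = [] := by
  match l with
  | [] => rfl
  | [i] =>
    exfalso
    have hi : 1 ≤ i := h1 i List.mem_cons_self
    simp only [run_cons, run_nil, step] at hrun
    rw [if_pos (by omega : (0:ℕ) < i)] at hrun
    have := congrArg Prod.snd hrun
    simp at this
  | [i, j] =>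
    exfalso
    have hi : 1 ≤ i := h1 i List.mem_cons_self
    have hj : 1 ≤ j := h1 j (by simp)
    have hij : i ≠ j := by intro h; exact hne i [] (by rw [h])
    simp only [run_cons, run_nil, step] at hrun
    rw [if_pos (by omega : (0:ℕ) < i)] at hrun
    by_cases hc : i - 1 - 0 < j
    · rw [if_pos (by simpa using hc)] at hrun
      have h2 := congrArg Prod.snd hrun
      have h1' := congrArg Prod.fst hrun
      simp at h2 h1'
      omega
    · rw [if_neg (by simpa using hc)] at hrun
      have h2 := congrArg Prod.snd hrun
      simp at h2
  | a :: b :: c :: t => exfalso; simp at hlen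

lemma rot_app (X Y : List ℕ) : (X ++ Y).rotate X.length = Y ++ X := by
  rw [List.rotate_eq_drop_append_take (by simp)]
  simp

lemma first_split {a : ℕ} {l : List ℕ} (h : a ∈ l) :
    ∃ s t, l = s ++ a :: t ∧ a ∉ s := by
  induction l with
  | nil => simp at h
  | cons x xs ih =>
    by_cases hxa : x = a
    · exact ⟨[], xs, by rw [hxa]; rfl, by simp⟩
    · have : a ∈ xs := by
        rcases List.mem_cons.mp h with h' | h'
        · exact absurd h'.symm hxa
        · exact h'
      obtain ⟨s, t, hst, hs⟩ := ih this
      exact ⟨x :: s, t, by rw [hst]; rfl, by simp [hs, Ne.symm hxa]⟩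

lemma t2 (m : ℕ) (B C : List ℕ) (hm : 2 ≤ m)
    (hB : ∀ i ∈ B, 1 ≤ i ∧ i < m) (hC : ∀ i ∈ C, i < m)
    (hBne : ∀ a t, B ≠ a :: a :: t) (hB0 : B ≠ [])
    (hrun : run (m :: (B ++ m :: C)) (m - 1, true) = (m - 1, true)) :
    3 ≤ B.length := by
  rw [run_cons, step_move true (by omega : m - 1 < m)] at hrun
  rw [(by omega : m - 1 - (m - 1) = 0)] at hrun
  rw [run_append, run_cons] at hrun
  rcases hps : run B (0, !true) with ⟨p, s⟩
  rw [hps] at hrun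
  have hp : p + 1 < m := by
    have := run_lt m B (0, !true) (fun i hi => (hB i hi).2) (by omega)
    rw [hps] at this; exact this
  rw [step_move s (by omega : p < m)] at hrun
  by_cases hp0 : p = 0
  · subst hp0
    rw [(by omega : m - 1 - 0 = m - 1), run_fix m C (!s) hC] at hrun
    have hs : s = false := by
      have := congrArg Prod.snd hrun; simp at this; exact this
    subst hs
    by_contra hlen
    push_neg at hlen
    exact hB0 (short_loop B (!true) (fun i hi => (hB i hi).1) hBne (by omega) hps)
  · exfalso
    have := run_lt m C (m - 1 - p, !s) hC (by omega)
    rw [hrun] at this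
    simp at this
    omega

lemma t3 (m a b : ℕ) (E : List ℕ) (hm : 2 ≤ m) (ha1 : 1 ≤ a) (ha2 : a < m)
    (hb1 : 1 ≤ b) (hb2 : b < m) (hE : ∀ i ∈ E, i < m)
    (hrun : run (m :: a :: m :: b :: m :: E) (m - 1, true) = (m - 1, true)) : False := by
  rw [run_cons, step_move true (by omega : m - 1 < m),
    (by omega : m - 1 - (m - 1) = 0)] at hrun
  rw [run_cons, step_move (!true) (by omega : 0 < a)] at hrun
  rw [run_cons, step_move (!!true) (by omega : a - 1 - 0 < m)] at hrun
  by_cases hc : m - 1 - (a - 1 - 0) < b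
  · rw [run_cons, step_move (!!!true) hc] at hrun
    have hq : b - 1 - (m - 1 - (a - 1 - 0)) < m := by omega
    rw [run_cons, step_move (!!!!true) hq] at hrun
    by_cases hq0 : b - 1 - (m - 1 - (a - 1 - 0)) = 0
    · rw [hq0, (by omega : m - 1 - 0 = m - 1), run_fix m E _ hE] at hrun
      have := congrArg Prod.snd hrun; simp at this
    · have := run_lt m E (m - 1 - (b - 1 - (m - 1 - (a - 1 - 0))), !!!!!true) hE
        (by omega : (m - 1 - (b - 1 - (m - 1 - (a - 1 - 0)))) + 1 < m)
      rw [hrun] at this; simp at this; omega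
  · rw [run_cons, step_stay (!!!true) hc] at hrun
    rw [run_cons, step_move (!!!true) (by omega : m - 1 - (a - 1 - 0) < m)] at hrun
    have := run_lt m E (m - 1 - (m - 1 - (a - 1 - 0)), !!!!true) hE
      (by omega : (m - 1 - (m - 1 - (a - 1 - 0))) + 1 < m)
    rw [hrun] at this; simp at this; omega


lemma master1 (m : ℕ) (A : List ℕ) (h3 : 3 ≤ (m :: A).length) (h7 : (m :: A).length ≤ 7)
    (hb : ∀ i ∈ (m :: A), 1 ≤ i ∧ i ≤ m)
    (hne : ∀ j a t, (m :: A).rotate j ≠ a :: a :: t)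
    (hrun : ∀ j, run ((m :: A).rotate j) (m - 1, true) = (m - 1, true)) : False := by
  have hm1 : 1 ≤ m := (hb m List.mem_cons_self).1
  have hm2 : 2 ≤ m := by
    by_contra h
    have hmeq : m = 1 := by omega
    match A, h3 with
    | [], h3 => simp at h3
    | a :: A', _ =>
      have ha : a = 1 := by have := hb a (by simp); omega
      exact hne 0 m A' (by rw [List.rotate_zero, hmeq, ha])
  by_cases hmA : m ∈ A
  · obtain ⟨B, C0, hA, hBm⟩ := first_split hmA
    subst hA
    have hB : ∀ i ∈ B, 1 ≤ i ∧ i < m := by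
      intro i hi
      have h := hb i (by simp [hi])
      exact ⟨h.1, lt_of_le_of_ne h.2 (by rintro rfl; exact hBm hi)⟩
    have hB0 : B ≠ [] := by
      rintro rfl
      exact hne 0 m C0 (by rw [List.rotate_zero]; rfl)
    have hBlen : 1 ≤ B.length := List.length_pos_iff.mpr hB0
    by_cases hmC : m ∈ C0
    · obtain ⟨D, E, hC, hDm⟩ := first_split hmC
      subst hC
      have hD : ∀ i ∈ D, 1 ≤ i ∧ i < m := by
        intro i hi
        have h := hb i (by simp [hi])
        exact ⟨h.1, lt_of_le_of_ne h.2 (by rintro rfl; exact hDm hi)⟩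
      have hD0 : D ≠ [] := by
        rintro rfl
        refine hne (m :: B).length m (E ++ m :: B) ?_
        have h1 : m :: (B ++ m :: ([] ++ m :: E)) = (m :: B) ++ (m :: m :: E) := by simp
        rw [h1, rot_app]
        simp
      have hDlen : 1 ≤ D.length := List.length_pos_iff.mpr hD0
      by_cases hmE : m ∈ E
      · -- t ≥ 4
        obtain ⟨F, G, hE, hFm⟩ := first_split hmE
        subst hE
        have hF0 : F ≠ [] := by
          rintro rfl
          refine hne (m :: B ++ m :: D).length m (G ++ (m :: B ++ m :: D)) ?_
          have h1 : m :: (B ++ m :: (D ++ m :: ([] ++ m :: G)))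
              = (m :: B ++ m :: D) ++ (m :: m :: G) := by simp
          rw [h1, rot_app]
          simp
        have hFlen : 1 ≤ F.length := List.length_pos_iff.mpr hF0
        have hlen : (m :: (B ++ m :: (D ++ m :: (F ++ m :: G)))).length
            = 4 + B.length + D.length + F.length + G.length := by simp; omega
        have hG0 : G = [] := by
          have : G.length = 0 := by omega
          exact List.eq_nil_of_length_eq_zero this
        subst hG0
        refine hne (m :: (B ++ m :: (D ++ m :: F))).length m (B ++ m :: (D ++ m :: F)) ?_
        have h1 : m :: (B ++ m :: (D ++ m :: (F ++ m :: [])))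
            = (m :: (B ++ m :: (D ++ m :: F))) ++ [m] := by simp
        rw [h1, rot_app]
        simp
      · -- t = 3
        have hE : ∀ i ∈ E, i < m := fun i hi =>
          lt_of_le_of_ne (hb i (by simp [hi])).2 (by rintro rfl; exact hmE hi)
        have hlen : (m :: (B ++ m :: (D ++ m :: E))).length
            = 3 + B.length + D.length + E.length := by simp; omega
        by_cases hE0 : E = []
        · subst hE0
          refine hne (m :: (B ++ m :: D)).length m (B ++ m :: D) ?_
          have h1 : m :: (B ++ m :: (D ++ m :: []))
              = (m :: (B ++ m :: D)) ++ [m] := by simp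
          rw [h1, rot_app]
          simp
        · have hElen : 1 ≤ E.length := List.length_pos_iff.mpr hE0
          have hBD : B.length + D.length ≤ 3 := by omega
          have hB2 : B.length ≤ 2 := by omega
          have hD2 : D.length ≤ 2 := by omega
          rcases (by omega : B.length = 1 ∨ B.length = 2) with hBl | hBl
          · obtain ⟨a, rfl⟩ := List.length_eq_one_iff.mp hBl
            rcases (by omega : D.length = 1 ∨ D.length = 2) with hDl | hDl
            · obtain ⟨b, rfl⟩ := List.length_eq_one_iff.mp hDl
              have ha := hB a (by simp)
              have hbb := hD b (by simp)
              refine t3 m a b E hm2 ha.1 ha.2 hbb.1 hbb.2 hE ?_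
              have := hrun 0
              rwa [List.rotate_zero] at this
            · obtain ⟨d1, d2, rfl⟩ := List.length_eq_two.mp hDl
              have hEl1 : E.length = 1 := by omega
              obtain ⟨e, rfl⟩ := List.length_eq_one_iff.mp hEl1
              have ha := hB a (by simp)
              have he : 1 ≤ e ∧ e < m := ⟨(hb e (by simp)).1, hE e (by simp)⟩
              have hd1 := hD d1 (by simp)
              have hd2 := hD d2 (by simp)
              refine t3 m e a [d1, d2] hm2 he.1 he.2 ha.1 ha.2
                (by intro i hi; rcases List.mem_pair.mp hi with rfl | rfl
                    exacts [hd1.2, hd2.2]) ?_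
              have h1 : m :: ([a] ++ m :: ([d1, d2] ++ m :: [e]))
                  = [m, a, m, d1, d2] ++ [m, e] := by simp
              have := hrun ([m, a, m, d1, d2] : List ℕ).length
              rw [h1, rot_app] at this
              exact this
          · obtain ⟨b1, b2, rfl⟩ := List.length_eq_two.mp hBl
            have hDl : D.length = 1 := by omega
            obtain ⟨d, rfl⟩ := List.length_eq_one_iff.mp hDl
            have hEl1 : E.length = 1 := by omega
            obtain ⟨e, rfl⟩ := List.length_eq_one_iff.mp hEl1
            have hd := hD d (by simp)
            have he : 1 ≤ e ∧ e < m := ⟨(hb e (by simp)).1, hE e (by simp)⟩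
            have hb1' := hB b1 (by simp)
            have hb2' := hB b2 (by simp)
            refine t3 m d e [b1, b2] hm2 hd.1 hd.2 he.1 he.2
              (by intro i hi; rcases List.mem_pair.mp hi with rfl | rfl
                  exacts [hb1'.2, hb2'.2]) ?_
            have h1 : m :: ([b1, b2] ++ m :: ([d] ++ m :: [e]))
                = [m, b1, b2] ++ [m, d, m, e] := by simp
            have := hrun ([m, b1, b2] : List ℕ).length
            rw [h1, rot_app] at this
            exact this
    · -- t = 2
      have hC : ∀ i ∈ C0, i < m := fun i hi =>
        lt_of_le_of_ne (hb i (by simp [hi])).2 (by rintro rfl; exact hmC hi)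
      have hBne : ∀ a t, B ≠ a :: a :: t := by
        rintro a t rfl
        refine hne ([m] : List ℕ).length a (t ++ m :: C0 ++ [m]) ?_
        have h1 : m :: (a :: a :: t ++ m :: C0) = [m] ++ (a :: a :: t ++ m :: C0) := by simp
        rw [h1, rot_app]
        simp
      have hlB := t2 m B C0 hm2 hB hC hBne hB0
        (by have := hrun 0; rwa [List.rotate_zero] at this)
      have hrot2 : (m :: (B ++ m :: C0)).rotate (m :: B).length = m :: (C0 ++ m :: B) := by
        have h1 : m :: (B ++ m :: C0) = (m :: B) ++ (m :: C0) := by simp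
        rw [h1, rot_app]
        simp
      have hC00 : C0 ≠ [] := by
        rintro rfl
        exact hne (m :: B).length m B (by rw [hrot2]; rfl)
      have hC0ne : ∀ a t, C0 ≠ a :: a :: t := by
        rintro a t rfl
        refine hne ((m :: B).length + ([m] : List ℕ).length) a (t ++ m :: B ++ [m]) ?_
        rw [← List.rotate_rotate, hrot2]
        have h1 : m :: (a :: a :: t ++ m :: B) = [m] ++ (a :: a :: t ++ m :: B) := by simp
        rw [h1, rot_app]
        simp
      have hC' : ∀ i ∈ C0, 1 ≤ i ∧ i < m := fun i hi => ⟨(hb i (by simp [hi])).1, hC i hi⟩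
      have hB' : ∀ i ∈ B, i < m := fun i hi => (hB i hi).2
      have hlC := t2 m C0 B hm2 hC' hB' hC0ne hC00
        (by have := hrun (m :: B).length; rwa [hrot2] at this)
      have hlen : (m :: (B ++ m :: C0)).length = 2 + B.length + C0.length := by simp; omega
      omega
  · -- t = 1
    have hrun0 := hrun 0
    rw [List.rotate_zero, run_cons, step_move true (by omega : m - 1 < m),
      (by omega : m - 1 - (m - 1) = 0)] at hrun0
    have hAlt : ∀ i ∈ A, i < m := fun i hi =>
      lt_of_le_of_ne (hb i (List.mem_cons_of_mem _ hi)).2 (by rintro rfl; exact hmA hi)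
    have := run_lt m A (0, !true) hAlt (by omega)
    rw [hrun0] at this
    simp at this
    omega

/-- The master combinatorial lemma: no cyclic word of flips of length between 3 and 7
can close up. -/
lemma master (m : ℕ) (l : List ℕ) (h3 : 3 ≤ l.length) (h7 : l.length ≤ 7)
    (hb : ∀ i ∈ l, 1 ≤ i ∧ i ≤ m) (hm : m ∈ l)
    (hne : ∀ k a t, l.rotate k ≠ a :: a :: t)
    (hrun : ∀ k, run (l.rotate k) (m - 1, true) = (m - 1, true)) : False := by
  obtain ⟨B0, A0, hsplit, -⟩ := first_split hm
  have hrot1 : l.rotate B0.length = m :: (A0 ++ B0) := by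
    rw [hsplit, rot_app]
    rfl
  have hlen1 : (m :: (A0 ++ B0)).length = l.length := by
    rw [← hrot1, List.length_rotate]
  refine master1 m (A0 ++ B0) (by omega) (by omega) ?_ ?_ ?_
  · intro i hi
    exact hb i (List.mem_rotate.mp (hrot1 ▸ hi : i ∈ l.rotate B0.length))
  · intro j a t h
    exact hne (B0.length + j) a t (by rwa [← List.rotate_rotate, hrot1])
  · intro j
    have := hrun (B0.length + j)
    rwa [← List.rotate_rotate, hrot1] at this



lemma prefixRev_invol (n i : ℕ) (x : Fin n → ℤ) : prefixRev n i (prefixRev n i x) = x := by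
  funext k
  simp only [prefixRev]
  by_cases h : k.1 < i ∧ i ≤ n
  · rw [dif_pos h, dif_pos ⟨by omega, h.2⟩, neg_neg]
    congr 1
    exact Fin.ext (by simp; omega)
  · rw [dif_neg h, dif_neg h]

lemma adj_onesided {n : ℕ} {u v : BPVert n} (h : (BP n).Adj u v) :
    ∃ i, 1 ≤ i ∧ i ≤ n ∧ v.1 = prefixRev n i u.1 := by
  obtain ⟨-, i, h1, h2, h3 | h3⟩ := h
  · exact ⟨i, h1, h2, h3⟩
  · exact ⟨i, h1, h2, by rw [h3, prefixRev_invol]⟩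

/-- The element `e` sits at position `ps.1` of `v` with sign `ps.2`. -/
def At {n : ℕ} (v : BPVert n) (e : ℤ) (ps : ℕ × Bool) : Prop :=
  ∃ h : ps.1 < n, v.1 ⟨ps.1, h⟩ = if ps.2 then e else -e

lemma At_step {n : ℕ} {u v : BPVert n} {e : ℤ} {p : ℕ} {s : Bool} {i : ℕ}
    (h : At u e (p, s)) (hi1 : 1 ≤ i) (hin : i ≤ n)
    (hv : v.1 = prefixRev n i u.1) : At v e (step i (p, s)) := by
  obtain ⟨hp, he⟩ := h
  by_cases hc : p < i
  · rw [step_move _ hc]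
    refine ⟨by omega, ?_⟩
    rw [hv]
    show (if h : i - 1 - p < i ∧ i ≤ n then -(u.1 ⟨i - 1 - (i - 1 - p), by omega⟩) else _)
      = _
    rw [dif_pos ⟨by omega, hin⟩]
    have hk : (⟨i - 1 - (i - 1 - p), by omega⟩ : Fin n) = ⟨p, hp⟩ := Fin.ext (by simp; omega)
    rw [hk, he]
    cases s <;> simp
  · rw [step_stay _ hc]
    refine ⟨hp, ?_⟩
    rw [hv]
    show (if h : p < i ∧ i ≤ n then -(u.1 ⟨i - 1 - p, by omega⟩) else u.1 ⟨p, hp⟩) = _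
    rw [dif_neg (fun hh => hc hh.1)]
    exact he

lemma At_unique {n : ℕ} {v : BPVert n} {e : ℤ} {p p' : ℕ} {s s' : Bool}
    (h1 : At v e (p, s)) (h2 : At v e (p', s')) (he : e ≠ 0) : p = p' ∧ s = s' := by
  obtain ⟨hp, he1⟩ := h1
  obtain ⟨hp', he2⟩ := h2
  have habs : (v.1 ⟨p, hp⟩).natAbs = (v.1 ⟨p', hp'⟩).natAbs := by
    rw [he1, he2]
    cases s <;> cases s' <;> simp
  have := v.2.2 habs
  have hpp : p = p' := congrArg Fin.val this
  subst hpp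
  refine ⟨rfl, ?_⟩
  rw [he1] at he2
  cases s <;> cases s'
  · rfl
  · exfalso; rw [if_neg (by simp), if_pos rfl] at he2; omega
  · exfalso; rw [if_pos rfl, if_neg (by simp)] at he2; omega
  · rfl



/-- the list of flips `f j, f (j+1), ..., f (j+c-1)`. -/
def segf (f : ℕ → ℕ) : ℕ → ℕ → List ℕ
  | _, 0 => []
  | j, c + 1 => f j :: segf f (j + 1) c

@[simp] lemma segf_length (f : ℕ → ℕ) (j c : ℕ) : (segf f j c).length = c := by
  induction c generalizing j with
  | zero => rfl
  | succ c ih => simp [segf, ih]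

lemma mem_segf {f : ℕ → ℕ} {i : ℕ} : ∀ {j c : ℕ}, i ∈ segf f j c ↔ ∃ t, t < c ∧ i = f (j + t) := by
  intro j c
  induction c generalizing j with
  | zero => simp [segf]
  | succ c ih =>
    simp only [segf, List.mem_cons, ih]
    constructor
    · rintro (rfl | ⟨t, ht, rfl⟩)
      · exact ⟨0, by omega, by simp⟩
      · exact ⟨t + 1, by omega, by rw [show j + (t+1) = j + 1 + t by omega]⟩
    · rintro ⟨t, ht, rfl⟩
      cases t with
      | zero => left; simp
      | succ t => right; exact ⟨t, by omega, by rw [show j + (t+1) = j + 1 + t by omega]⟩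

lemma segf_append (f : ℕ → ℕ) (c₁ : ℕ) : ∀ (j c₂ : ℕ),
    segf f j (c₁ + c₂) = segf f j c₁ ++ segf f (j + c₁) c₂ := by
  induction c₁ with
  | zero => intro j c₂; simp [segf, Nat.zero_add]
  | succ c₁ ih =>
    intro j c₂
    rw [show c₁ + 1 + c₂ = (c₁ + c₂) + 1 by omega]
    show f j :: segf f (j + 1) (c₁ + c₂) = (f j :: segf f (j + 1) c₁) ++ _
    rw [ih (j + 1) c₂, List.cons_append, show j + 1 + c₁ = j + (c₁ + 1) by omega]

section Walk

open SimpleGraph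

lemma getVert_support_get {V : Type*} {G : SimpleGraph V} {u v : V} (w : G.Walk u v) :
    ∀ i, i ≤ w.length → w.support[i]? = some (w.getVert i) := by
  induction w with
  | nil =>
    intro i hi
    have : i = 0 := by simpa using hi
    subst this
    rfl
  | cons h p ih =>
    intro i hi
    cases i with
    | zero => rw [Walk.support_cons]; simp
    | succ i =>
      rw [Walk.support_cons, List.getElem?_cons_succ, Walk.getVert_cons_succ]
      exact ih i (by simpa [Walk.length_cons] using hi)

lemma cycle_inj {V : Type*} {G : SimpleGraph V} {a : V} (w : G.Walk a a) (hc : w.IsCycle)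
    {j k : ℕ} (hj : j < w.length) (hk : k < w.length) (h : w.getVert j = w.getVert k) :
    j = k := by
  have hnd := hc.support_nodup
  have hL3 : 3 ≤ w.length := hc.three_le_length
  have htl : w.support.tail.length = w.length := by
    have := w.length_support
    have := w.support_eq_cons
    simp [List.length_tail, w.length_support]
  have htail : ∀ i, i + 1 ≤ w.length → w.support.tail[i]? = some (w.getVert (i + 1)) := by
    intro i hi
    have hcons := w.support_eq_cons
    have := getVert_support_get w (i + 1) (by omega)
    rw [hcons, List.getElem?_cons_succ] at this
    exact this
  have key : ∀ i, i < w.length → w.support.tail[(if i = 0 then w.length else i) - 1]?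
      = some (w.getVert i) := by
    intro i hi
    by_cases h0 : i = 0
    · subst h0
      rw [if_pos rfl]
      have := htail (w.length - 1) (by omega)
      rw [show w.length - 1 + 1 = w.length by omega] at this
      rw [this, w.getVert_length, w.getVert_zero]
    · rw [if_neg h0]
      have := htail (i - 1) (by omega)
      rw [show i - 1 + 1 = i by omega] at this
      exact this
  have e1 := key j hj
  have e2 := key k hk
  rw [h] at e1
  have hidx : (if j = 0 then w.length else j) - 1 = (if k = 0 then w.length else k) - 1 :=
    (List.getElem?_inj (by rw [htl]; split <;> omega) hnd).mp (e1.trans e2.symm)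
  by_cases h0 : j = 0 <;> by_cases h1 : k = 0 <;> simp [h0, h1] at hidx <;> omega

/-- every cycle in `BP n` has length at least 8. -/
lemma cycle_ge8 {n : ℕ} (hn : 2 ≤ n) {a : BPVert n} (w : (BP n).Walk a a)
    (hc : w.IsCycle) : 8 ≤ w.length := by
  by_contra hlen
  push_neg at hlen
  set L := w.length with hLdef
  have hL3 : 3 ≤ L := hc.three_le_length
  have hadj : ∀ k, k < L → ∃ i, 1 ≤ i ∧ i ≤ n ∧
      (w.getVert (k + 1)).1 = prefixRev n i (w.getVert k).1 := by
    intro k hk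
    exact adj_onesided (w.adj_getVert_succ hk)
  choose! f hf1 hf2 hf3 using hadj
  obtain ⟨k₀, hk₀, hmax⟩ := Finset.exists_max_image (Finset.range L) f ⟨0, by simp; omega⟩
  rw [Finset.mem_range] at hk₀
  set m := f k₀ with hmdef
  have hm1 : 1 ≤ m := hf1 k₀ hk₀
  have hmn : m ≤ n := hf2 k₀ hk₀
  set l := segf f 0 L with hldef
  have hlen_l : l.length = L := segf_length f 0 L
  have hrot : ∀ k, k ≤ L → l.rotate k = segf f k (L - k) ++ segf f 0 k := by
    intro k hk
    have hsplit : l = segf f 0 k ++ segf f k (L - k) := by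
      have h0 := segf_append f k 0 (L - k)
      rw [Nat.zero_add, show k + (L - k) = L by omega] at h0
      rw [hldef, h0]
    have h2 := rot_app (segf f 0 k) (segf f k (L - k))
    rw [segf_length] at h2
    rw [hsplit, h2]
  -- propagation of the tracked element
  have At_run : ∀ (e : ℤ) (c j : ℕ) (ps : ℕ × Bool), j + c ≤ L →
      At (w.getVert j) e ps → At (w.getVert (j + c)) e (run (segf f j c) ps) := by
    intro e c
    induction c with
    | zero => intro j ps _ h; simpa [segf] using h
    | succ c ih =>
      intro j ps hjc h
      have hjL : j < L := by omega
      rcases ps with ⟨p, s⟩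
      have h1 : At (w.getVert (j + 1)) e (step (f j) (p, s)) :=
        At_step h (hf1 j hjL) (hf2 j hjL) (hf3 j hjL)
      have h2 := ih (j + 1) _ (by omega) h1
      rw [show j + 1 + c = j + (c + 1) by omega] at h2
      exact h2
  -- the closed-trajectory property for every rotation
  have hrun : ∀ k, run (l.rotate k) (m - 1, true) = (m - 1, true) := by
    have hrun' : ∀ k, k < L → run (l.rotate k) (m - 1, true) = (m - 1, true) := by
      intro k hk
      have hm1n : m - 1 < n := by omega
      set e : ℤ := (w.getVert k).1 ⟨m - 1, hm1n⟩ with hedef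
      have he0 : e ≠ 0 := ((w.getVert k).2.1 _).1
      have At0 : At (w.getVert k) e (m - 1, true) := ⟨hm1n, by simp [hedef]⟩
      have P1 := At_run e (L - k) k _ (by omega) At0
      rw [show k + (L - k) = L by omega] at P1
      have hgv : w.getVert L = w.getVert 0 := by
        rw [w.getVert_length, w.getVert_zero]
      rw [hgv] at P1
      have P2 := At_run e k 0 _ (by omega) P1
      rw [Nat.zero_add] at P2
      have hrw : run (l.rotate k) (m - 1, true)
          = run (segf f 0 k) (run (segf f k (L - k)) (m - 1, true)) := by
        rw [hrot k (by omega), run_append]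
      rcases hq : run (l.rotate k) (m - 1, true) with ⟨q, s⟩
      rw [hrw.symm, hq] at P2
      obtain ⟨h1, h2⟩ := At_unique P2 At0 he0
      rw [h1, h2]
    intro k
    have := hrun' (k % L) (Nat.mod_lt _ (by omega))
    rwa [← hlen_l, List.rotate_mod] at this
  -- no two cyclically-consecutive flips are equal
  have hne : ∀ k x t, l.rotate k ≠ x :: x :: t := by
    have hne' : ∀ k, k < L → ∀ x t, l.rotate k ≠ x :: x :: t := by
      intro k hk x t hrot'
      rw [hrot k (by omega)] at hrot'
      -- extract f k = f ((k+1) % L)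
      have hff : f k = f ((k + 1) % L) := by
        by_cases hk1 : k + 1 < L
        · have h1 : L - k = (L - k - 2) + 1 + 1 := by omega
          rw [h1] at hrot'
          simp only [segf, List.cons_append] at hrot'
          have e0 := (List.cons.injEq _ _ _ _).mp hrot'
          have e1 := (List.cons.injEq _ _ _ _).mp e0.2
          rw [Nat.mod_eq_of_lt hk1]; exact e0.1.trans e1.1.symm
        · have hkL : k = L - 1 := by omega
          have h1 : L - k = 1 := by omega
          have h2 : k = (k - 1) + 1 := by omega
          rw [h1] at hrot'
          rw [h2] at hrot'
          simp only [segf, List.cons_append] at hrot'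
          rw [← h2] at hrot'
          have e0 := (List.cons.injEq _ _ _ _).mp hrot'
          have e1 := (List.cons.injEq _ _ _ _).mp e0.2
          have : (k + 1) % L = 0 := by
            rw [show k + 1 = L by omega, Nat.mod_self]
          rw [this]; exact e0.1.trans e1.1.symm
      -- derive a vertex collision
      by_cases hk1 : k + 1 < L
      · rw [Nat.mod_eq_of_lt hk1] at hff
        have hv1 := hf3 k (by omega)
        have hv2 := hf3 (k + 1) hk1
        rw [← hff] at hv2
        have hcoll : w.getVert (k + 2) = w.getVert k := by
          apply Subtype.ext
          rw [show k + 2 = k + 1 + 1 by omega, hv2, hv1, prefixRev_invol]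
        by_cases hk2 : k + 2 < L
        · have := cycle_inj w hc hk2 hk hcoll
          omega
        · have hk2L : k + 2 = L := by omega
          have hgv : w.getVert (k + 2) = w.getVert 0 := by
            rw [hk2L, w.getVert_length, w.getVert_zero]
          rw [hgv] at hcoll
          have := cycle_inj w hc (by omega : 0 < L) hk hcoll
          omega
      · have hkL : k + 1 = L := by omega
        rw [show (k + 1) % L = 0 by rw [hkL, Nat.mod_self]] at hff
        have hv1 := hf3 k (by omega)
        have hv2 := hf3 0 (by omega)
        rw [← hff] at hv2
        have hgv : w.getVert (k + 1) = w.getVert 0 := by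
          rw [hkL, w.getVert_length, w.getVert_zero]
        rw [hgv] at hv1
        have hcoll : w.getVert 1 = w.getVert k := by
          apply Subtype.ext
          rw [hv2, hv1, prefixRev_invol]
        have := cycle_inj w hc (by omega : 1 < L) hk hcoll
        omega
    intro k
    have := hne' (k % L) (Nat.mod_lt _ (by omega))
    rwa [← hlen_l, List.rotate_mod] at this
  -- apply the master lemma
  refine master m l (by omega) (by omega) ?_ ?_ hne hrun
  · intro i hi
    rw [hldef, mem_segf] at hi
    obtain ⟨t, ht, rfl⟩ := hi
    rw [Nat.zero_add]
    exact ⟨hf1 t ht, hmax t (Finset.mem_range.mpr ht)⟩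
  · rw [hldef, mem_segf]
    exact ⟨k₀, hk₀, by rw [Nat.zero_add]⟩

end Walk



open SimpleGraph

/-- vertex of `BP n` with prescribed first two entries. -/
def vf (n : ℕ) (a b : ℤ) : Fin n → ℤ :=
  fun k => if k.1 = 0 then a else if k.1 = 1 then b else (k.1 + 1 : ℤ)

lemma vf_sp (n : ℕ) (hn : 2 ≤ n) (a b : ℤ)
    (hab : (a.natAbs = 1 ∧ b.natAbs = 2) ∨ (a.natAbs = 2 ∧ b.natAbs = 1)) :
    IsSignedPerm n (vf n a b) := by
  constructor
  · intro k
    have hk := k.2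
    unfold vf
    split_ifs with h0 h1
    · rcases hab with ⟨h1, h2⟩ | ⟨h1, h2⟩ <;> constructor <;> omega
    · rcases hab with ⟨h1, h2⟩ | ⟨h1, h2⟩ <;> constructor <;> omega
    · constructor <;> omega
  · intro j k h
    have hj := j.2
    have hk := k.2
    simp only [vf] at h
    apply Fin.ext
    split_ifs at h <;> rcases hab with ⟨h1, h2⟩ | ⟨h1, h2⟩ <;> omega

def bpv (n : ℕ) (hn : 2 ≤ n) (a b : ℤ)
    (hab : (a.natAbs = 1 ∧ b.natAbs = 2) ∨ (a.natAbs = 2 ∧ b.natAbs = 1)) : BPVert n :=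
  ⟨vf n a b, vf_sp n hn a b hab⟩

lemma flip1 (n : ℕ) (hn : 2 ≤ n) (a b : ℤ) : prefixRev n 1 (vf n a b) = vf n (-a) b := by
  funext k
  have hk := k.2
  simp only [prefixRev, vf]
  split_ifs <;> first | rfl | omega

lemma flip2 (n : ℕ) (hn : 2 ≤ n) (a b : ℤ) : prefixRev n 2 (vf n a b) = vf n (-b) (-a) := by
  funext k
  have hk := k.2
  simp only [prefixRev, vf]
  split_ifs <;> first | rfl | omega

lemma vf_pair (n : ℕ) (hn : 2 ≤ n) (a b : ℤ) :
    (vf n a b ⟨0, by omega⟩, vf n a b ⟨1, by omega⟩) = (a, b) := by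
  simp [vf]


lemma hbne (n : ℕ) (hn : 2 ≤ n) (a b a' b' : ℤ) (hab hab')
    (h : ¬(a = a' ∧ b = b')) : bpv n hn a b hab ≠ bpv n hn a' b' hab' := by
  intro heq
  have h0 := congrFun (congrArg Subtype.val heq) ⟨0, by omega⟩
  have h1 := congrFun (congrArg Subtype.val heq) ⟨1, by omega⟩
  simp [bpv, vf] at h0 h1
  exact h ⟨h0, h1⟩

lemma adjf1' (n : ℕ) (hn : 2 ≤ n) (a b a' b' : ℤ) (hab hab')
    (h1 : a' = -a) (h2 : b' = b) :
    (BP n).Adj (bpv n hn a b hab) (bpv n hn a' b' hab') := by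
  subst h1; subst h2
  refine ⟨?_, 1, le_rfl, by omega, Or.inl ?_⟩
  · refine hbne n hn a b' (-a) b' hab hab' ?_
    rintro ⟨h0, -⟩
    rcases hab with ⟨u1, u2⟩ | ⟨u1, u2⟩ <;> omega
  · show (bpv n hn (-a) b' hab').1 = prefixRev n 1 (bpv n hn a b' hab).1
    exact (flip1 n hn a b').symm

lemma adjf2' (n : ℕ) (hn : 2 ≤ n) (a b a' b' : ℤ) (hab hab')
    (h1 : a' = -b) (h2 : b' = -a) :
    (BP n).Adj (bpv n hn a b hab) (bpv n hn a' b' hab') := by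
  subst h1; subst h2
  refine ⟨?_, 2, by omega, by omega, Or.inl ?_⟩
  · refine hbne n hn a b (-b) (-a) hab hab' ?_
    rintro ⟨h0, -⟩
    rcases hab with ⟨u1, u2⟩ | ⟨u1, u2⟩ <;> omega
  · show (bpv n hn (-b) (-a) hab').1 = prefixRev n 2 (bpv n hn a b hab).1
    exact (flip2 n hn a b).symm

def keyf (n : ℕ) (hn : 2 ≤ n) (v : BPVert n) : ℤ × ℤ :=
  (v.1 ⟨0, by omega⟩, v.1 ⟨1, by omega⟩)

lemma keyf_bpv (n : ℕ) (hn : 2 ≤ n) (a b : ℤ) (hab) :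
    keyf n hn (bpv n hn a b hab) = (a, b) := by
  simp [keyf, bpv, vf]

lemma exists_cycle8 (n : ℕ) (hn : 2 ≤ n) :
    ∃ (a : BPVert n) (w : (BP n).Walk a a), w.IsCycle ∧ w.length = 8 := by
  refine ⟨(bpv n hn 1 2 (by norm_num)), (Walk.cons (adjf1' n hn _ _ _ _ (by norm_num) (by norm_num) (by norm_num) (by norm_num) : (BP n).Adj (bpv n hn 1 2 (by norm_num)) (bpv n hn (-1) 2 (by norm_num))) (Walk.cons (adjf2' n hn _ _ _ _ (by norm_num) (by norm_num) (by norm_num) (by norm_num) : (BP n).Adj (bpv n hn (-1) 2 (by norm_num)) (bpv n hn (-2) 1 (by norm_num))) (Walk.cons (adjf1' n hn _ _ _ _ (by norm_num) (by norm_num) (by norm_num) (by norm_num) : (BP n).Adj (bpv n hn (-2) 1 (by norm_num)) (bpv n hn 2 1 (by norm_num))) (Walk.cons (adjf2' n hn _ _ _ _ (by norm_num) (by norm_num) (by norm_num) (by norm_num) : (BP n).Adj (bpv n hn 2 1 (by norm_num)) (bpv n hn (-1) (-2) (by norm_num))) (Walk.cons (adjf1' n hn _ _ _ _ (by norm_num)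 (by norm_num) (by norm_num) (by norm_num) : (BP n).Adj (bpv n hn (-1) (-2) (by norm_num)) (bpv n hn 1 (-2) (by norm_num))) (Walk.cons (adjf2' n hn _ _ _ _ (by norm_num) (by norm_num) (by norm_num) (by norm_num) : (BP n).Adj (bpv n hn 1 (-2) (by norm_num)) (bpv n hn 2 (-1) (by norm_num))) (Walk.cons (adjf1' n hn _ _ _ _ (by norm_num) (by norm_num) (by norm_num) (by norm_num) : (BP n).Adj (bpv n hn 2 (-1) (by norm_num)) (bpv n hn (-2) (-1) (by norm_num))) (Walk.cons (adjf2' n hn _ _ _ _ (by norm_num) (by norm_num) (by norm_num) (by norm_num) : (BP n).Adj (bpv n hn (-2) (-1) (by norm_num)) (bpv n hn 1 2 (by norm_num))) Walk.nil)))))))), ?_, by simp⟩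
  rw [Walk.isCycle_def]
  refine ⟨?_, by simp, ?_⟩
  · rw [Walk.isTrail_def]
    apply List.Nodup.of_map (Sym2.map (keyf n hn))
    simp only [Walk.edges_cons, Walk.edges_nil, List.map_cons, List.map_nil,
      Sym2.map_pair_eq, keyf_bpv]
    decide
  · apply List.Nodup.of_map (keyf n hn)
    simp only [Walk.support_cons, Walk.support_nil, List.tail_cons, List.map_cons,
      List.map_nil, keyf_bpv]
    decide


end BPG

/-- for `n ≥ 2`, `BP_n` has no cycle of length less than 8:
its girth equals 8. -/
theorem BP_girth (n : ℕ) (hn : 2 ≤ n) :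
    (8 : ℕ) ≤ (BP n).girth ∧ (BP n).girth = 8 := by
  obtain ⟨a, w, hc, hl8⟩ := BPG.exists_cycle8 n hn
  have he : (BP n).egirth = 8 := by
    apply le_antisymm
    · have h1 : (BP n).egirth ≤ (w.length : ℕ∞) :=
        le_trans (le_trans (iInf_le _ a) (iInf_le _ w)) (iInf_le _ hc)
      rw [hl8] at h1
      exact_mod_cast h1
    · rw [SimpleGraph.le_egirth]
      intro b w' hw'
      have := BPG.cycle_ge8 hn w' hw'
      exact_mod_cast this
  have hg : (BP n).girth = 8 := by
    rw [SimpleGraph.girth, he]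
    rfl
  exact ⟨le_of_eq hg.symm, hg⟩
end

section
/- For any connected graph G with minimum degree δ(G) that has two adjacent vertices both of degree δ(G), and any k with 3 ≤ k ≤ |V(G)|, the generalized k-connectivity satisfies κ_k(G) ≤ δ(G) − 1. -/
/-- `T` is an `S`-tree of `G`: a subtree of `G` containing all of `S`. -/
def IsSTree {V : Type*} (G : SimpleGraph V) (S : Set V) (T : G.Subgraph) : Prop :=
  T.coe.IsTree ∧ S ⊆ T.verts

/-- There are `r` pairwise internally edge disjoint `S`-trees in `G`. -/
def HasIEDTrees {V : Type*} (G : SimpleGraph V) (S : Set V) (r : ℕ) : Prop :=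
  ∃ T : Fin r → G.Subgraph, (∀ i, IsSTree G S (T i)) ∧
    ∀ i j, i ≠ j →
      (T i).verts ∩ (T j).verts = S ∧ (T i).edgeSet ∩ (T j).edgeSet = ∅

/-- `κ_G(S)`: the maximum number of pairwise internally edge disjoint `S`-trees. -/
noncomputable def treeConn {V : Type*} (G : SimpleGraph V) (S : Set V) : ℕ :=
  sSup {r | HasIEDTrees G S r}

/-- The generalized `k`-connectivity `κ_k(G)`. -/
noncomputable def gconn {V : Type*} (G : SimpleGraph V) (k : ℕ) : ℕ :=
  sInf {m | ∃ S : Finset V, S.card = k ∧ m = treeConn G (S : Set V)}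

/-!
Let `u v` be adjacent vertices of degree `d`, and let `S` be a `k`-set containing `u`, `v` and a
third vertex `w`. Given `r ≥ d` internally edge disjoint `S`-trees, each tree uses at least one of
the `d` edges at `u` and the trees share no edge, so each tree uses exactly one edge at `u`, every
edge at `u` is used, and likewise at `v`. The tree that contains the edge `uv` then has no other
edge at `u` or at `v`, so it cannot reach `w`.
-/

open Finset Function

namespace SimpleGraph

variable {V : Type*} {G : SimpleGraph V}

lemma Subgraph.Preconnected.mem_of_adj_closed {H : G.Subgraph} (hH : H.Preconnected) {A : Set V}
    (hA : ∀ x ∈ A, ∀ y, H.Adj x y → y ∈ A) {a b : V} (ha : a ∈ H.verts) (hb : b ∈ H.verts)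
    (haA : a ∈ A) : b ∈ A :=
  (hH ⟨a, ha⟩ ⟨b, hb⟩).mem_subgraphVerts (H := (⊤ : H.coe.Subgraph).induce {x | x.1 ∈ A})
    (fun _ hx _ hxy => ⟨hx, hA _ hx _ hxy, hxy⟩) haA

end SimpleGraph

lemma IsSTree.exists_adj {V : Type*} {G : SimpleGraph V} {S : Set V} {T : G.Subgraph}
    (hT : IsSTree G S T) {a b : V} (ha : a ∈ S) (hb : b ∈ S) (hab : a ≠ b) : ∃ c, T.Adj a c :=
  have : Nontrivial T.verts := (Set.nontrivial_of_mem_mem_ne (hT.2 ha) (hT.2 hb) hab).coe_sort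
  SimpleGraph.Subgraph.Preconnected.exists_adj_of_nontrivial ⟨hT.1.connected.preconnected⟩
    ⟨a, hT.2 ha⟩

lemma Finset.card_eq_one_and_biUnion_eq_of_card_le {ι α : Type*} [Fintype ι] [DecidableEq α]
    {F : ι → Finset α} {B : Finset α} (hsub : ∀ i, F i ⊆ B) (hdisj : Pairwise (Disjoint on F))
    (hne : ∀ i, (F i).Nonempty) (hB : #B ≤ Fintype.card ι) :
    (∀ i, #(F i) = 1) ∧ univ.biUnion F = B := by
  have hU : univ.biUnion F ⊆ B := biUnion_subset.2 fun i _ => hsub i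
  have hcard : #(univ.biUnion F) = ∑ i, #(F i) :=
    card_biUnion fun i _ j _ hij => hdisj hij
  have hsum : ∑ i, #(F i) ≤ ∑ _i : ι, 1 := by
    simpa [← hcard] using (card_le_card hU).trans hB
  have hone : ∀ i, #(F i) = 1 := fun i =>
    (sum_eq_sum_iff_of_le fun i _ => (hne i).card_pos).1
      (le_antisymm (sum_le_sum fun i _ => (hne i).card_pos) hsum) i (mem_univ i) |>.symm
  refine ⟨hone, eq_of_subset_of_card_le hU ?_⟩
  simpa [hcard, hone] using hB

section TreeConnectivity

variable {V : Type*} {G : SimpleGraph V} [G.LocallyFinite] {S : Set V} {r : ℕ}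

open Classical in
lemma card_filter_adj_eq_one_of_degree_le {T : Fin r → G.Subgraph}
    (hT : ∀ i, IsSTree G S (T i)) (hdisj : Pairwise (Disjoint on fun i => (T i).edgeSet))
    {a b : V} (ha : a ∈ S) (hb : b ∈ S) (hab : a ≠ b) (har : G.degree a ≤ r) :
    (∀ i, #((G.neighborFinset a).filter ((T i).Adj a)) = 1) ∧
      univ.biUnion (fun i => (G.neighborFinset a).filter ((T i).Adj a)) = G.neighborFinset a := by
  refine card_eq_one_and_biUnion_eq_of_card_le (fun i => filter_subset _ _) ?_ ?_ ?_
  · intro i j hij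
    refine disjoint_filter.2 fun x _ hi hj => ?_
    exact Set.disjoint_left.1 (hdisj hij) (SimpleGraph.Subgraph.mem_edgeSet.2 hi)
      (SimpleGraph.Subgraph.mem_edgeSet.2 hj)
  · intro i
    obtain ⟨c, hc⟩ := (hT i).exists_adj ha hb hab
    exact ⟨c, mem_filter.2 ⟨G.mem_neighborFinset a c |>.2 hc.adj_sub, hc⟩⟩
  · simpa using har

lemma HasIEDTrees.lt_degree_of_adj (h : HasIEDTrees G S r) {u v w : V} (huv : G.Adj u v)
    (hu : u ∈ S) (hv : v ∈ S) (hw : w ∈ S) (hwu : w ≠ u) (hwv : w ≠ v)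
    (hvu : G.degree v ≤ G.degree u) : r < G.degree u := by
  classical
  obtain ⟨T, hT, hIED⟩ := h
  by_contra! hur
  have hdisj : Pairwise (Disjoint on fun i => (T i).edgeSet) := fun i j hij =>
    Set.disjoint_iff_inter_eq_empty.2 (hIED i j hij).2
  obtain ⟨hFu, hUu⟩ := card_filter_adj_eq_one_of_degree_le hT hdisj hu hv huv.ne hur
  obtain ⟨hFv, -⟩ := card_filter_adj_eq_one_of_degree_le hT hdisj hv hu huv.ne.symm (hvu.trans hur)
  obtain ⟨i, -, hvi⟩ := mem_biUnion.1 (hUu ▸ (G.mem_neighborFinset u v).2 huv)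
  have huvi : (T i).Adj u v := (mem_filter.1 hvi).2
  have honly : ∀ {a b}, #((G.neighborFinset a).filter ((T i).Adj a)) = 1 → (T i).Adj a b →
      ∀ y, (T i).Adj a y → y = b := fun hone hab y hay =>
    card_le_one.1 hone.le y (mem_filter.2 ⟨(G.mem_neighborFinset _ _).2 hay.adj_sub, hay⟩) _
      (mem_filter.2 ⟨(G.mem_neighborFinset _ _).2 hab.adj_sub, hab⟩)
  have hclosed : ∀ x ∈ ({u, v} : Set V), ∀ y, (T i).Adj x y → y ∈ ({u, v} : Set V) := by
    rintro x (rfl | rfl) y hxy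
    · exact Or.inr (honly (hFu i) huvi y hxy)
    · exact Or.inl (honly (hFv i) huvi.symm y hxy)
  have hwuv : w ∈ ({u, v} : Set V) :=
    SimpleGraph.Subgraph.Preconnected.mem_of_adj_closed ⟨(hT i).1.connected.preconnected⟩
      hclosed ((hT i).2 hu) ((hT i).2 hw) (Or.inl rfl)
  rcases hwuv with rfl | rfl <;> contradiction

lemma treeConn_le_degree_sub_one {u v w : V} (huv : G.Adj u v) (hu : u ∈ S) (hv : v ∈ S)
    (hw : w ∈ S) (hwu : w ≠ u) (hwv : w ≠ v) (hvu : G.degree v ≤ G.degree u) :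
    treeConn G S ≤ G.degree u - 1 :=
  csSup_le' fun _ hr => Nat.le_sub_one_of_lt (hr.lt_degree_of_adj huv hu hv hw hwu hwv hvu)

end TreeConnectivity

lemma gconn_le_treeConn {V : Type*} (G : SimpleGraph V) (S : Finset V) :
    gconn G #S ≤ treeConn G S :=
  Nat.sInf_le ⟨S, rfl, rfl⟩

theorem gconn_le_minDegree_sub_one_general {V : Type*} [Fintype V]
    (G : SimpleGraph V) [DecidableRel G.Adj]
    (d : ℕ)
    (u v : V) (huv : G.Adj u v) (hu : G.degree u = d) (hv : G.degree v = d)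
    (k : ℕ) (hk3 : 3 ≤ k) (hk : k ≤ Fintype.card V) :
    gconn G k ≤ d - 1 := by
  classical
  have hpair : #{u, v} ≤ 2 := card_le_two
  obtain ⟨S, huvS, -, rfl⟩ :=
    exists_subsuperset_card_eq (n := k) (subset_univ {u, v}) (by omega) (by simpa using hk)
  obtain ⟨w, hwS, hw⟩ := not_subset.1 fun h : S ⊆ {u, v} => by
    have := card_le_card h
    omega
  simp only [mem_insert, mem_singleton, not_or] at hw
  subst hu
  calc gconn G #S ≤ treeConn G S := gconn_le_treeConn G S
    _ ≤ G.degree u - 1 :=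
      treeConn_le_degree_sub_one huv (huvS (by simp)) (huvS (by simp)) hwS hw.1 hw.2 hv.le

/-- if a connected graph `G` has two adjacent vertices both of
minimum degree `d`, then `κ_k(G) ≤ d - 1` for every `3 ≤ k ≤ |V(G)|`. -/
theorem gconn_le_minDegree_sub_one {V : Type*} [Fintype V]
    (G : SimpleGraph V) [DecidableRel G.Adj] (hG : G.Connected)
    (d : ℕ) (hd : ∀ w : V, d ≤ G.degree w)
    (u v : V) (huv : G.Adj u v) (hu : G.degree u = d) (hv : G.degree v = d)
    (k : ℕ) (hk3 : 3 ≤ k) (hk : k ≤ Fintype.card V) :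
    gconn G k ≤ d - 1 :=
  gconn_le_minDegree_sub_one_general G d u v huv hu hv k hk3 hk
end

section
/- For n ≥ 3 and any subset J of cluster indices with |J| ≤ 2n − 3, the union of the clusters BP_n^i for i ∉ J, together with all cross edges among them, is connected; in particular, any union of at least 3 clusters (closed under taking the induced cross edges) whose index set has size at least 3 is connected. -/
namespace BPaux

variable {n : ℕ}

lemma prefixRev_apply_lt (i : ℕ) (x : Fin n → ℤ) (k : Fin n) (hk : k.1 < i) (hi : i ≤ n)
    (hm : i - 1 - k.1 < n) : prefixRev n i x k = -(x ⟨i - 1 - k.1, hm⟩) := by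
  simp only [prefixRev]
  rw [dif_pos ⟨hk, hi⟩]

lemma prefixRev_apply_ge (i : ℕ) (x : Fin n → ℤ) (k : Fin n) (hk : i ≤ k.1) :
    prefixRev n i x k = x k := by
  simp only [prefixRev]
  rw [dif_neg (by omega)]

lemma prefixRev_isSignedPerm {i : ℕ} (hi1 : 1 ≤ i) (hi : i ≤ n) {x : Fin n → ℤ}
    (hx : IsSignedPerm n x) : IsSignedPerm n (prefixRev n i x) := by
  obtain ⟨h1, h2⟩ := hx
  constructor
  · intro k
    by_cases hk : k.1 < i
    · rw [prefixRev_apply_lt i x k hk hi (by omega)]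
      refine ⟨neg_ne_zero.mpr (h1 _).1, ?_⟩
      rw [Int.natAbs_neg]; exact (h1 _).2
    · rw [prefixRev_apply_ge i x k (by omega)]; exact h1 k
  · have key : ∀ k : Fin n, (prefixRev n i x k).natAbs =
        (x (if h : k.1 < i then ⟨i - 1 - k.1, by omega⟩ else k)).natAbs := by
      intro k
      by_cases hk : k.1 < i
      · rw [prefixRev_apply_lt i x k hk hi (by omega), dif_pos hk, Int.natAbs_neg]
      · rw [prefixRev_apply_ge i x k (by omega), dif_neg hk]
    intro a b hab
    simp only [key] at hab
    have := h2 hab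
    by_cases ha : a.1 < i <;> by_cases hb : b.1 < i <;>
      simp only [dif_pos, dif_neg, ha, hb] at this <;>
      [skip; skip; skip; exact this] <;>
      · apply Fin.ext
        have := congrArg Fin.val this
        simp at this
        omega

def flip (x : BPVert n) (i : ℕ) (hi1 : 1 ≤ i) (hi : i ≤ n) : BPVert n :=
  ⟨prefixRev n i x.1, prefixRev_isSignedPerm hi1 hi x.2⟩

lemma flip_apply_lt (x : BPVert n) (i : ℕ) (hi1 : 1 ≤ i) (hi : i ≤ n) (k : Fin n)
    (hk : k.1 < i) (hm : i - 1 - k.1 < n) :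
    (flip x i hi1 hi).1 k = -(x.1 ⟨i - 1 - k.1, hm⟩) := prefixRev_apply_lt i x.1 k hk hi hm

lemma flip_apply_ge (x : BPVert n) (i : ℕ) (hi1 : 1 ≤ i) (hi : i ≤ n) (k : Fin n)
    (hk : i ≤ k.1) : (flip x i hi1 hi).1 k = x.1 k := prefixRev_apply_ge i x.1 k hk

lemma flip_ne (x : BPVert n) (i : ℕ) (hi1 : 1 ≤ i) (hi : i ≤ n) : flip x i hi1 hi ≠ x := by
  intro h
  have h0 : (0:ℕ) < n := by omega
  have hh := congrArg (fun z : BPVert n => z.1 ⟨0, h0⟩) h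
  rw [flip_apply_lt x i hi1 hi ⟨0, h0⟩ (by simp; omega) (by omega)] at hh
  by_cases hi1' : i = 1
  · subst hi1'
    have : x.1 ⟨0, h0⟩ = 0 := by
      have h2 : (1 - 1 - (0:ℕ)) = 0 := by omega
      simp only [h2] at hh
      omega
    exact (x.2.1 _).1 this
  · have : ((-(x.1 ⟨i - 1 - 0, by omega⟩)).natAbs) = (x.1 ⟨0, h0⟩).natAbs := by rw [hh]
    rw [Int.natAbs_neg] at this
    have heq := x.2.2 this
    have := congrArg Fin.val heq
    simp at this
    omega

lemma adj_flip (x : BPVert n) (i : ℕ) (hi1 : 1 ≤ i) (hi : i ≤ n) :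
    (BP n).Adj x (flip x i hi1 hi) :=
  ⟨fun h => flip_ne x i hi1 hi h.symm, i, hi1, hi, Or.inl rfl⟩

lemma reach_flip (S : Set (BPVert n)) {x : BPVert n} (hx : x ∈ S) (i : ℕ) (hi1 : 1 ≤ i)
    (hi : i ≤ n) (hy : flip x i hi1 hi ∈ S) :
    ((BP n).induce S).Reachable ⟨x, hx⟩ ⟨flip x i hi1 hi, hy⟩ :=
  SimpleGraph.Adj.reachable (by exact adj_flip x i hi1 hi)

lemma lastEntry_def (h : 0 < n) (x : BPVert n) : lastEntry x = x.1 ⟨n - 1, by omega⟩ :=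
  dif_pos h

lemma lastEntry_flip (x : BPVert n) (i : ℕ) (hi1 : 1 ≤ i) (hi : i ≤ n) (h' : i ≤ n - 1)
    (hn : 0 < n) : lastEntry (flip x i hi1 hi) = lastEntry x := by
  rw [lastEntry_def hn, lastEntry_def hn]
  exact flip_apply_ge x i hi1 hi _ (by simp; omega)

lemma lastEntry_flip_full (x : BPVert n) (hn : 0 < n) :
    lastEntry (flip x n hn le_rfl) = -(x.1 ⟨0, hn⟩) := by
  rw [lastEntry_def hn]
  rw [flip_apply_lt x n hn le_rfl _ (by simp; omega) (by omega)]
  have hfun : ∀ (a b : Fin n), a = b → x.1 a = x.1 b := fun a b h => by rw [h]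
  rw [hfun _ ⟨0, hn⟩ (by apply Fin.ext; simp)]

lemma exists_abs (x : BPVert n) {v : ℤ} (hv0 : v ≠ 0) (hvn : v.natAbs ≤ n) :
    ∃ p : Fin n, (x.1 p).natAbs = v.natAbs := by
  classical
  have hinj := x.2.2
  have hsub : (Finset.univ.image fun k => (x.1 k).natAbs) ⊆ Finset.Icc 1 n := by
    intro a ha
    simp only [Finset.mem_image, Finset.mem_univ, true_and] at ha
    obtain ⟨k, rfl⟩ := ha
    simp only [Finset.mem_Icc]
    exact ⟨Int.natAbs_pos.mpr (x.2.1 k).1, (x.2.1 k).2⟩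
  have heq : (Finset.univ.image fun k => (x.1 k).natAbs) = Finset.Icc 1 n := by
    apply Finset.eq_of_subset_of_card_le hsub
    rw [Finset.card_image_of_injective _ hinj, Finset.card_univ, Fintype.card_fin,
      Nat.card_Icc]
    omega
  have hv : v.natAbs ∈ Finset.Icc 1 n := by
    simp only [Finset.mem_Icc]
    exact ⟨Int.natAbs_pos.mpr hv0, hvn⟩
  rw [← heq] at hv
  simp only [Finset.mem_image, Finset.mem_univ, true_and] at hv
  obtain ⟨p, hp⟩ := hv
  exact ⟨p, hp⟩

lemma val_congr (x : BPVert n) {a b : Fin n} (h : a.1 = b.1) : x.1 a = x.1 b :=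
  congrArg x.1 (Fin.ext h)

lemma flip_apply_zero (x : BPVert n) (i : ℕ) (hi1 : 1 ≤ i) (hi : i ≤ n) (hn : 0 < n) :
    (flip x i hi1 hi).1 ⟨0, hn⟩ = -(x.1 ⟨i - 1, by omega⟩) := by
  rw [flip_apply_lt x i hi1 hi ⟨0, hn⟩ (by simp; omega) (by omega)]
  exact congrArg Neg.neg (val_congr x (by simp))

lemma flip_apply_top (x : BPVert n) (i : ℕ) (hi1 : 1 ≤ i) (hi : i ≤ n) (h : i - 1 < n) :
    (flip x i hi1 hi).1 ⟨i - 1, h⟩ = -(x.1 ⟨0, by omega⟩) := by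
  rw [flip_apply_lt x i hi1 hi ⟨i - 1, h⟩ (by simp; omega) (by omega)]
  exact congrArg Neg.neg (val_congr x (by simp))

lemma reach_agree (S : Set (BPVert n)) (hn : 0 < n)
    (hcl : ∀ (x : BPVert n), x ∈ S → ∀ i (hi1 : 1 ≤ i) (hi : i ≤ n), i ≤ n - 1 →
      flip x i hi1 hi ∈ S) :
    ∀ k, k ≤ n - 1 → ∀ (x y : BPVert n) (hx : x ∈ S) (hy : y ∈ S),
      (∀ m : Fin n, k ≤ m.1 → x.1 m = y.1 m) →
      ((BP n).induce S).Reachable ⟨x, hx⟩ ⟨y, hy⟩ := by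
  intro k
  induction k with
  | zero =>
    intro _ x y hx hy h
    have hxy : x = y := Subtype.ext (funext fun m => h m (Nat.zero_le _))
    subst hxy
    rfl
  | succ k ih =>
    intro hk x y hx hy h
    have hkn : k < n := by omega
    by_cases hxy : x.1 ⟨k, hkn⟩ = y.1 ⟨k, hkn⟩
    · refine ih (by omega) x y hx hy fun m hm => ?_
      rcases Nat.eq_or_lt_of_le hm with h' | h'
      · have hmk : m = ⟨k, hkn⟩ := Fin.ext h'.symm
        rw [hmk]; exact hxy
      · exact h m h'
    · set v := y.1 ⟨k, hkn⟩ with hv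
      have hv0 : v ≠ 0 := (y.2.1 _).1
      have hvn : v.natAbs ≤ n := (y.2.1 _).2
      obtain ⟨p, hp⟩ := exists_abs x hv0 hvn
      have hpk : p.1 ≤ k := by
        by_contra hc
        have hxp : x.1 p = y.1 p := h p (by omega)
        have h2 : (fun j => (y.1 j).natAbs) p = (fun j => (y.1 j).natAbs) ⟨k, hkn⟩ := by
          simp only []
          rw [← hxp, hp]
        have h3 := y.2.2 h2
        have h4 := congrArg Fin.val h3
        simp at h4
        omega
      set x1 := flip x (p.1 + 1) (by omega) (by omega) with hx1def
      have hx1S : x1 ∈ S := hcl x hx _ _ _ (by omega)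
      have hx1r : ((BP n).induce S).Reachable ⟨x, hx⟩ ⟨x1, hx1S⟩ :=
        reach_flip S hx _ _ _ hx1S
      have hx10 : x1.1 ⟨0, hn⟩ = -(x.1 p) := by
        rw [hx1def, flip_apply_zero x _ _ _ hn]
        exact congrArg Neg.neg (val_congr x (by simp))
      have hx1agree : ∀ m : Fin n, k + 1 ≤ m.1 → x1.1 m = x.1 m :=
        fun m hm => flip_apply_ge x _ _ _ m (by omega)
      have hstep : ∃ (x2 : BPVert n) (hx2S : x2 ∈ S),
          ((BP n).induce S).Reachable ⟨x, hx⟩ ⟨x2, hx2S⟩ ∧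
          x2.1 ⟨0, hn⟩ = -v ∧ ∀ m : Fin n, k + 1 ≤ m.1 → x2.1 m = x.1 m := by
        have habs : (x1.1 ⟨0, hn⟩).natAbs = v.natAbs := by
          rw [hx10, Int.natAbs_neg, hp]
        rcases Int.natAbs_eq_natAbs_iff.mp habs with hcase | hcase
        · refine ⟨flip x1 1 le_rfl (by omega), hcl x1 hx1S _ _ _ (by omega),
            hx1r.trans (reach_flip S hx1S _ _ _ (hcl x1 hx1S _ _ _ (by omega))), ?_, ?_⟩
          · rw [flip_apply_zero x1 1 le_rfl (by omega) hn]
            rw [val_congr x1 (show ((⟨1 - 1, by omega⟩ : Fin n)).1 = ((⟨0, hn⟩ : Fin n)).1 by simp)]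
            rw [hcase]
          · intro m hm
            rw [flip_apply_ge x1 1 _ _ m (by omega)]
            exact hx1agree m hm
        · exact ⟨x1, hx1S, hx1r, hcase, hx1agree⟩
      obtain ⟨x2, hx2S, hx2r, hx20, hx2agree⟩ := hstep
      set x3 := flip x2 (k + 1) (by omega) (by omega) with hx3def
      have hx3S : x3 ∈ S := hcl x2 hx2S _ _ _ (by omega)
      have hx3r : ((BP n).induce S).Reachable ⟨x, hx⟩ ⟨x3, hx3S⟩ :=
        hx2r.trans (reach_flip S hx2S _ _ _ hx3S)
      refine hx3r.trans (ih (by omega) x3 y hx3S hy fun m hm => ?_)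
      rcases Nat.eq_or_lt_of_le hm with h' | h'
      · have hmk : m = ⟨k, hkn⟩ := Fin.ext h'.symm
        rw [hmk]
        have htop : x3.1 ⟨k, hkn⟩ = -(x2.1 ⟨0, hn⟩) := by
          rw [hx3def]
          rw [val_congr (flip x2 (k + 1) (by omega) (by omega))
            (show ((⟨k, hkn⟩ : Fin n)).1 = ((⟨k + 1 - 1, hkn⟩ : Fin n)).1 by simp)]
          exact flip_apply_top x2 (k + 1) (by omega) (by omega) hkn
        rw [htop, hx20]
        simp [hv]
      · rw [flip_apply_ge x2 _ _ _ m (by omega), hx2agree m (by omega)]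
        exact h m (by omega)

lemma hop (S : Set (BPVert n)) (hn : 3 ≤ n)
    (hcl : ∀ (x : BPVert n), x ∈ S → ∀ i (hi1 : 1 ≤ i) (hi : i ≤ n), i ≤ n - 1 →
      flip x i hi1 hi ∈ S)
    {x : BPVert n} (hx : x ∈ S) {m : ℤ} (hm0 : m ≠ 0) (hmn : m.natAbs ≤ n)
    (hma : m.natAbs ≠ (lastEntry x).natAbs)
    (hmS : ∀ z : BPVert n, lastEntry z = m → z ∈ S) :
    ∃ (z : BPVert n) (hz : z ∈ S), lastEntry z = m ∧
      ((BP n).induce S).Reachable ⟨x, hx⟩ ⟨z, hz⟩ := by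
  have hn0 : 0 < n := by omega
  obtain ⟨p, hp⟩ := exists_abs x hm0 hmn
  have hpn : p.1 < n - 1 := by
    rcases Nat.lt_or_ge p.1 (n - 1) with h' | h'
    · exact h'
    · exfalso
      have hple : p.1 = n - 1 := by omega
      have : x.1 p = lastEntry x := by
        rw [lastEntry_def hn0]
        exact val_congr x (by simp; omega)
      rw [this] at hp
      exact hma hp.symm
  set x1 := flip x (p.1 + 1) (by omega) (by omega) with hx1def
  have hx1S : x1 ∈ S := hcl x hx _ _ _ (by omega)
  have hx1r : ((BP n).induce S).Reachable ⟨x, hx⟩ ⟨x1, hx1S⟩ :=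
    reach_flip S hx _ _ _ hx1S
  have hx10 : x1.1 ⟨0, hn0⟩ = -(x.1 p) := by
    rw [hx1def, flip_apply_zero x _ _ _ hn0]
    exact congrArg Neg.neg (val_congr x (by simp))
  have hstep : ∃ (x2 : BPVert n) (hx2S : x2 ∈ S),
      ((BP n).induce S).Reachable ⟨x, hx⟩ ⟨x2, hx2S⟩ ∧ x2.1 ⟨0, hn0⟩ = -m := by
    have habs : (x1.1 ⟨0, hn0⟩).natAbs = m.natAbs := by
      rw [hx10, Int.natAbs_neg, hp]
    rcases Int.natAbs_eq_natAbs_iff.mp habs with hcase | hcase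
    · refine ⟨flip x1 1 le_rfl (by omega), hcl x1 hx1S _ _ _ (by omega),
        hx1r.trans (reach_flip S hx1S _ _ _ (hcl x1 hx1S _ _ _ (by omega))), ?_⟩
      rw [flip_apply_zero x1 1 le_rfl (by omega) hn0]
      rw [val_congr x1 (show ((⟨1 - 1, by omega⟩ : Fin n)).1 = ((⟨0, hn0⟩ : Fin n)).1 by simp)]
      rw [hcase]
    · exact ⟨x1, hx1S, hx1r, hcase⟩
  obtain ⟨x2, hx2S, hx2r, hx20⟩ := hstep
  set z := flip x2 n hn0 le_rfl with hzdef
  have hzlast : lastEntry z = m := by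
    rw [hzdef, lastEntry_flip_full x2 hn0, hx20]
    ring
  have hzS : z ∈ S := hmS z hzlast
  exact ⟨z, hzS, hzlast, hx2r.trans (reach_flip S hx2S _ _ _ hzS)⟩

def baseVert (n : ℕ) (m : ℤ) : Fin n → ℤ :=
  fun k => if k.1 = n - 1 then m else if k.1 + 1 = m.natAbs then (n : ℤ) else ((k.1 + 1 : ℕ) : ℤ)

lemma baseVert_isSignedPerm (hn : 0 < n) {m : ℤ} (h0 : m ≠ 0) (hm : m.natAbs ≤ n) :
    IsSignedPerm n (baseVert n m) := by
  have hm1 : 1 ≤ m.natAbs := Int.natAbs_pos.mpr h0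
  constructor
  · intro k
    have hk := k.isLt
    simp only [baseVert]
    split_ifs with h1 h2
    · exact ⟨h0, hm⟩
    · exact ⟨Int.natCast_ne_zero.mpr (by omega), by rw [Int.natAbs_natCast]⟩
    · exact ⟨Int.natCast_ne_zero.mpr (by omega), by rw [Int.natAbs_natCast]; omega⟩
  · intro a b hab
    have ha := a.isLt
    have hb := b.isLt
    simp only [baseVert] at hab
    apply Fin.ext
    split_ifs at hab <;> simp only [Int.natAbs_natCast] at hab <;> omega

lemma lastEntry_baseVert (hn : 0 < n) {m : ℤ} (h0 : m ≠ 0) (hm : m.natAbs ≤ n) :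
    lastEntry (⟨baseVert n m, baseVert_isSignedPerm hn h0 hm⟩ : BPVert n) = m := by
  simp only [lastEntry, dif_pos hn]
  simp [baseVert]

lemma exists_index (hn : 3 ≤ n) (J : Finset ℤ) (hJ : ∀ j ∈ J, j ≠ 0 ∧ j.natAbs ≤ n)
    (hcard : J.card ≤ 2 * n - 3) (E : Finset ℤ) (hE : E.card ≤ 2) :
    ∃ m : ℤ, m ≠ 0 ∧ m.natAbs ≤ n ∧ m ∉ J ∧ m ∉ E := by
  classical
  set T : Finset ℤ := (Finset.Icc (-(n : ℤ)) n).erase 0 with hT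
  have hTcard : T.card = 2 * n := by
    rw [hT, Finset.card_erase_of_mem, Int.card_Icc]
    · have h2 : ((n : ℤ) + 1 - -(n : ℤ)) = (2 * n + 1 : ℤ) := by ring
      rw [h2]
      omega
    · simp only [Finset.mem_Icc]
      omega
  by_contra hcon
  push_neg at hcon
  have hsub : T ⊆ J ∪ E := by
    intro m hm
    rw [hT] at hm
    simp only [Finset.mem_erase, Finset.mem_Icc] at hm
    by_cases hJm : m ∈ J
    · exact Finset.mem_union_left _ hJm
    · exact Finset.mem_union_right _ (hcon m hm.1 (by omega) hJm)
  have h1 := Finset.card_le_card hsub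
  have h2 := Finset.card_union_le J E
  omega

end BPaux

/-- for `n ≥ 3` and any set `J` of cluster indices with
`|J| ≤ 2n - 3`, the union of the clusters `BP_n^i` for `i ∉ J`, with all cross
edges among them (i.e. the induced subgraph), is connected. -/
theorem BP_union_clusters_connected (n : ℕ) (hn : 3 ≤ n) (J : Finset ℤ)
    (hJ : ∀ j ∈ J, j ≠ 0 ∧ j.natAbs ≤ n) (hcard : J.card ≤ 2 * n - 3) :
    ((BP n).induce {x : BPVert n | lastEntry x ∉ J}).Connected := by
  classical
  have hn0 : 0 < n := by omega
  set S : Set (BPVert n) := {x : BPVert n | lastEntry x ∉ J} with hSdef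
  have hcl : ∀ (x : BPVert n), x ∈ S → ∀ i (hi1 : 1 ≤ i) (hi : i ≤ n), i ≤ n - 1 →
      BPaux.flip x i hi1 hi ∈ S := by
    intro x hx i hi1 hi h'
    show lastEntry (BPaux.flip x i hi1 hi) ∉ J
    rw [BPaux.lastEntry_flip x i hi1 hi h' hn0]
    exact hx
  have hlastfacts : ∀ x : BPVert n, lastEntry x ≠ 0 ∧ (lastEntry x).natAbs ≤ n := by
    intro x
    rw [BPaux.lastEntry_def hn0]
    exact x.2.1 _
  have key : ∀ (x y : BPVert n) (hx : x ∈ S) (hy : y ∈ S), lastEntry x = lastEntry y →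
      ((BP n).induce S).Reachable ⟨x, hx⟩ ⟨y, hy⟩ := by
    intro x y hx hy hl
    apply BPaux.reach_agree S hn0 hcl (n - 1) le_rfl
    intro m hm
    have hmlt := m.isLt
    have hm' : m = ⟨n - 1, by omega⟩ := Fin.ext (by simp; omega)
    rw [hm']
    rw [BPaux.lastEntry_def hn0, BPaux.lastEntry_def hn0] at hl
    exact hl
  rw [SimpleGraph.connected_iff]
  refine ⟨?_, ?_⟩
  · rintro ⟨x, hx⟩ ⟨y, hy⟩
    have hbJ : lastEntry y ∉ J := hy
    have hyfacts := hlastfacts y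
    have hxfacts := hlastfacts x
    by_cases hab : lastEntry x = lastEntry y
    · exact key x y hx hy hab
    · by_cases habs : (lastEntry y).natAbs = (lastEntry x).natAbs
      · obtain ⟨m, hm0, hmn, hmJ, hmE⟩ := BPaux.exists_index hn J hJ hcard
          {lastEntry x, -(lastEntry x)}
          ((Finset.card_insert_le _ _).trans (by simp))
        simp only [Finset.mem_insert, Finset.mem_singleton] at hmE
        push_neg at hmE
        have hmabs : m.natAbs ≠ (lastEntry x).natAbs := by
          intro h
          rcases Int.natAbs_eq_natAbs_iff.mp h with h' | h'
          · exact hmE.1 h'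
          · exact hmE.2 h'
        obtain ⟨z, hz, hzl, hzr⟩ := BPaux.hop S hn hcl hx hm0 hmn hmabs
          (fun z hzl => show lastEntry z ∉ J by rw [hzl]; exact hmJ)
        have hsecond : (lastEntry y).natAbs ≠ (lastEntry z).natAbs := by
          rw [hzl, habs]
          exact fun h => hmabs h.symm
        obtain ⟨w, hw, hwl, hwr⟩ := BPaux.hop S hn hcl hz hyfacts.1 hyfacts.2 hsecond
          (fun w hwl => show lastEntry w ∉ J by rw [hwl]; exact hbJ)
        exact hzr.trans (hwr.trans (key w y hw hy hwl))
      · have habs' : (lastEntry y).natAbs ≠ (lastEntry x).natAbs := habs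
        obtain ⟨z, hz, hzl, hzr⟩ := BPaux.hop S hn hcl hx hyfacts.1 hyfacts.2 habs'
          (fun z hzl => show lastEntry z ∉ J by rw [hzl]; exact hbJ)
        exact hzr.trans (key z y hz hy hzl)
  · obtain ⟨m, hm0, hmn, hmJ, -⟩ := BPaux.exists_index hn J hJ hcard ∅ (by simp)
    exact ⟨⟨⟨BPaux.baseVert n m, BPaux.baseVert_isSignedPerm hn0 hm0 hmn⟩,
      show lastEntry _ ∉ J by rw [BPaux.lastEntry_baseVert hn0 hm0 hmn]; exact hmJ⟩⟩
end
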